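/- Let $X$ be a finite subset of $\mathbb{A}^s = K^s$ over a field $K$, let $I = I(X)$ be its vanishing ideal, and let $\prec$ be a monomial order on $S$. If $F$ is a finite set of polynomials of $S$ with $(I : (F)) \neq I$, then $|V_X(F)| = \deg(S/(I,F)) \le \deg(S/(\mathrm{in}_\prec(I), \mathrm{in}_\prec(F))) \le \deg(S/I) = |X|$; moreover $\deg(S/(I,F)) < \deg(S/I)$ if $(F) \not\subseteq I$. -/

import Mathlib

open MvPolynomial
open scoped MonomialOrder

variable {K : Type*} [Field K] {s : ℕ}

/-- The exponent of the initial (leading) monomial of `f` with respect to the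
monomial order `m` (it is `0` for `f = 0`). -/
noncomputable def leadExp (m : MonomialOrder (Fin s)) (f : MvPolynomial (Fin s) K) :
    Fin s →₀ ℕ :=
  m.toSyn.symm (f.support.sup fun a => m.toSyn a)

/-- The coefficient of the initial monomial of `f`; `f` is monic when this is `1`. -/
noncomputable def leadCoeff (m : MonomialOrder (Fin s)) (f : MvPolynomial (Fin s) K) : K :=
  f.coeff (leadExp m f)

/-- The initial monomial `in_≺(f)` of `f`, as a (monic) monomial of the polynomial ring. -/
noncomputable def leadMon (m : MonomialOrder (Fin s)) (f : MvPolynomial (Fin s) K) :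
    MvPolynomial (Fin s) K :=
  monomial (leadExp m f) (1 : K)

/-- The initial ideal `in_≺(I)` of an ideal `I`: the ideal generated by the initial
monomials of the nonzero elements of `I`. -/
noncomputable def initialIdeal (m : MonomialOrder (Fin s)) (I : Ideal (MvPolynomial (Fin s) K)) :
    Ideal (MvPolynomial (Fin s) K) :=
  Ideal.span { g | ∃ f ∈ I, f ≠ 0 ∧ g = leadMon m f }

/-- The footprint `Δ_≺(I)` of `S/I`: the set of standard monomials, i.e. the (monic)
monomials that do not belong to the initial ideal of `I`. -/
noncomputable def stdMonomials (m : MonomialOrder (Fin s)) (I : Ideal (MvPolynomial (Fin s) K)) :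
    Set (MvPolynomial (Fin s) K) :=
  { g | (∃ a : Fin s →₀ ℕ, g = monomial a (1 : K)) ∧ g ∉ initialIdeal m I }

/-- `KΔ_≺(I)`, the `K`-linear span of the standard monomials of `S/I`. -/
noncomputable def stdSpan (m : MonomialOrder (Fin s)) (I : Ideal (MvPolynomial (Fin s) K)) :
    Submodule K (MvPolynomial (Fin s) K) :=
  Submodule.span K (stdMonomials m I)

/-- A monomial order is graded if monomials are first compared by their total degrees. -/
def IsGradedOrder (m : MonomialOrder (Fin s)) : Prop :=
  ∀ a b : Fin s →₀ ℕ, a.degree < b.degree → a ≺[m] b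

/-- The vanishing ideal `I(X)` of a set of points `X ⊆ 𝔸^s = K^s`. -/
def affVanishingIdeal (X : Set (Fin s → K)) : Ideal (MvPolynomial (Fin s) K) where
  carrier := { f | ∀ x ∈ X, eval x f = 0 }
  add_mem' := by
    intro a b ha hb x hx
    simp [ha x hx, hb x hx]
  zero_mem' := by intro x hx; simp
  smul_mem' := by
    intro c f hf x hx
    simp [smul_eq_mul, hf x hx]

/-- The evaluation map `S → K^X`, `f ↦ (f(P₁),…,f(P_m))`, at the points of a finite
set `X` of points of `𝔸^s`. -/
noncomputable def evalMap (X : Finset (Fin s → K)) :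
    MvPolynomial (Fin s) K →ₗ[K] (X → K) where
  toFun f := fun x => eval (x : Fin s → K) f
  map_add' f g := by funext x; simp
  map_smul' c f := by funext x; simp [Algebra.smul_def]

/-- The degree `deg(S/I)`.  For the ideals considered in this paper `S/I` is a
zero-dimensional ring, and its degree (the normalized leading coefficient of the
affine Hilbert polynomial) equals `dim_K (S/I)` (and is `0` when `I = S`). -/
noncomputable def adeg (I : Ideal (MvPolynomial (Fin s) K)) : ℕ :=
  Module.finrank K (MvPolynomial (Fin s) K ⧸ I)

/-- The affine Hilbert function `H_I^a(d) = dim_K (S_{≤d}/I_{≤d})`, computed as the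
dimension of the image of `S_{≤d}` in `S/I`. -/
noncomputable def affineHilbert (I : Ideal (MvPolynomial (Fin s) K)) (d : ℕ) : ℕ :=
  Module.finrank K
    ((restrictTotalDegree (Fin s) K d).map (Submodule.restrictScalars K I).mkQ)

/-- The support `χ(D)` of a subcode `D ⊆ K^ι`. -/
def codeSupport {ι : Type*} (D : Submodule K (ι → K)) : Set ι :=
  { i | ∃ v ∈ D, v i ≠ 0 }

/-- The `r`-th generalized Hamming weight of a linear code `C ⊆ K^ι`: the minimum
size of the support of an `r`-dimensional subcode. -/
noncomputable def ghw {ι : Type*} (C : Submodule K (ι → K)) (r : ℕ) : ℕ :=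
  sInf { n | ∃ D : Submodule K (ι → K),
    D ≤ C ∧ Module.finrank K (↥D) = r ∧ (codeSupport D).ncard = n }

/-- The minimum distance of a linear code: the least Hamming weight of a nonzero
codeword. -/
noncomputable def minDist {ι : Type*} (C : Submodule K (ι → K)) : ℕ :=
  sInf { n | ∃ v ∈ C, v ≠ 0 ∧ ({ i : ι | v i ≠ 0 }).ncard = n }

/-- The affine torus `T = (K^*)^s`. -/
noncomputable def torus (K : Type*) [Field K] [Fintype K] (s : ℕ) : Finset (Fin s → K) :=
  letI := Classical.decEq K
  Finset.univ.filter fun x => ∀ i, x i ≠ 0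

/-- `V_d`: the set of squarefree (monic) monomials of degree `d`. -/
def sqfreeMonomials (K : Type*) [Field K] (s d : ℕ) : Set (MvPolynomial (Fin s) K) :=
  { g | ∃ a : Fin s →₀ ℕ, (∀ i, a i ≤ 1) ∧ a.degree = d ∧ g = monomial a (1 : K) }

/-- `V_{≤d}`: the set of squarefree (monic) monomials of degree at most `d`. -/
def sqfreeMonomialsLe (K : Type*) [Field K] (s d : ℕ) : Set (MvPolynomial (Fin s) K) :=
  { g | ∃ a : Fin s →₀ ℕ, (∀ i, a i ≤ 1) ∧ a.degree ≤ d ∧ g = monomial a (1 : K) }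

/-- `V_X(F)`: the affine variety of `F` in `X`. -/
def VX (X : Finset (Fin s → K)) (F : Finset (MvPolynomial (Fin s) K)) : Set (Fin s → K) :=
  { x | x ∈ X ∧ ∀ f ∈ F, eval x f = 0 }

/-- `in_≺(F)`: the set of initial monomials of the (nonzero) elements of `F`. -/
noncomputable def leadMonSet (m : MonomialOrder (Fin s))
    (F : Finset (MvPolynomial (Fin s) K)) : Set (MvPolynomial (Fin s) K) :=
  { g | ∃ f ∈ F, f ≠ 0 ∧ g = leadMon m f }

/-!
Evaluation identifies `S/I(X)` with `K^X` (indicator polynomials of the points exist), so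
`deg(S/I(X)) = |X|`, and the same indicators show `I(X) + (F) = I(V_X(F))`. By Macaulay's theorem
the standard monomials of any ideal `L` give a `K`-basis of `S/L`, so `deg(S/L) = |Δ_≺(L)|`. The
ideal `M = in_≺(I) + (in_≺(F))` is generated by monomials, hence `in_≺(M) = M`, and
`in_≺(I) ⊆ M ⊆ in_≺(I + (F))`; the footprints are therefore nested,
`Δ(I + (F)) ⊆ Δ(M) ⊆ Δ(I)`, which gives the inequalities.
-/

theorem MvPolynomial.exists_eval_eq_one_and_eval_eq_zero {σ : Type*} {x y : σ → K}
    (h : x ≠ y) : ∃ p : MvPolynomial σ K, eval x p = 1 ∧ eval y p = 0 := by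
  obtain ⟨i, hi⟩ := Function.ne_iff.1 h
  exact ⟨C (x i - y i)⁻¹ * (X i - C (y i)), by simp [sub_ne_zero.2 hi], by simp⟩

theorem MvPolynomial.exists_indicator {σ : Type*} (P : Finset (σ → K)) (x : σ → K) :
    ∃ e : MvPolynomial σ K, eval x e = 1 ∧ ∀ y ∈ P, y ≠ x → eval y e = 0 := by
  classical
  choose! p hpx hpy using fun y (h : y ≠ x) => exists_eval_eq_one_and_eval_eq_zero h.symm
  refine ⟨∏ y ∈ P.erase x, p y, ?_, fun y hy hyx => ?_⟩
  · rw [map_prod]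
    exact Finset.prod_eq_one fun y hy => hpx y (Finset.ne_of_mem_erase hy)
  · rw [map_prod]
    exact Finset.prod_eq_zero (Finset.mem_erase.2 ⟨hyx, hy⟩) (hpy y hyx)

theorem evalMap_surjective (X : Finset (Fin s → K)) : Function.Surjective (evalMap X) := by
  classical
  choose e he₁ he₀ using exists_indicator (K := K) X
  rw [← LinearMap.range_eq_top, eq_top_iff, ← (Pi.basisFun K X).span_eq, Submodule.span_le]
  rintro _ ⟨x, rfl⟩
  refine ⟨e x, funext fun y => ?_⟩
  by_cases hyx : y = x
  · subst hyx; simp [evalMap, he₁]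
  · simp [evalMap, hyx, he₀ x y y.2 (Subtype.coe_ne_coe.2 hyx)]

theorem ker_evalMap (X : Finset (Fin s → K)) :
    LinearMap.ker (evalMap X) = (affVanishingIdeal (X : Set (Fin s → K))).restrictScalars K := by
  ext f
  simp only [LinearMap.mem_ker, Submodule.restrictScalars_mem, funext_iff]
  exact ⟨fun h x hx => h ⟨x, hx⟩, fun h x => h x x.2⟩

noncomputable def quotientAffVanishingIdealEquiv (X : Finset (Fin s → K)) :
    (MvPolynomial (Fin s) K ⧸ affVanishingIdeal (X : Set (Fin s → K))) ≃ₗ[K] (X → K) :=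
  (Submodule.Quotient.restrictScalarsEquiv K _).symm ≪≫ₗ
    Submodule.quotEquivOfEq _ _ (ker_evalMap X).symm ≪≫ₗ
    (evalMap X).quotKerEquivOfSurjective (evalMap_surjective X)

instance (X : Finset (Fin s → K)) :
    Module.Finite K (MvPolynomial (Fin s) K ⧸ affVanishingIdeal (X : Set (Fin s → K))) :=
  Module.Finite.equiv (quotientAffVanishingIdealEquiv X).symm

theorem adeg_affVanishingIdeal (X : Finset (Fin s → K)) :
    adeg (affVanishingIdeal (X : Set (Fin s → K))) = X.card := by
  rw [adeg, (quotientAffVanishingIdealEquiv X).finrank_eq, Module.finrank_fintype_fun_eq_card,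
    Fintype.card_coe]

theorem adeg_affVanishingIdeal_of_finite {Y : Set (Fin s → K)} (hY : Y.Finite) :
    adeg (affVanishingIdeal Y) = Y.ncard := by
  lift Y to Finset (Fin s → K) using hY
  rw [adeg_affVanishingIdeal, Set.ncard_coe_finset]

theorem VX_finite (X : Finset (Fin s → K)) (F : Finset (MvPolynomial (Fin s) K)) :
    (VX X F).Finite :=
  X.finite_toSet.subset fun _ hx => hx.1

theorem ncard_VX_lt (X : Finset (Fin s → K)) (F : Finset (MvPolynomial (Fin s) K))
    (hF : ¬ Ideal.span (F : Set (MvPolynomial (Fin s) K)) ≤ affVanishingIdeal (X : Set _)) :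
    (VX X F).ncard < X.card := by
  rw [Ideal.span_le, Set.not_subset] at hF
  obtain ⟨f, hfF, hfX⟩ := hF
  obtain ⟨x, hxX, hfx⟩ : ∃ x ∈ X, eval x f ≠ 0 := by simpa [affVanishingIdeal] using hfX
  rw [← Set.ncard_coe_finset]
  exact Set.ncard_lt_ncard ⟨fun _ hy => hy.1, fun h => hfx ((h hxX).2 f hfF)⟩ X.finite_toSet

theorem affVanishingIdeal_sup_span (X : Finset (Fin s → K)) (F : Finset (MvPolynomial (Fin s) K)) :
    affVanishingIdeal (X : Set (Fin s → K)) ⊔ Ideal.span (F : Set (MvPolynomial (Fin s) K)) =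
      affVanishingIdeal (VX X F) := by
  refine le_antisymm (sup_le (fun g hg x hx => hg x hx.1) ?_) fun g hg => ?_
  · exact Ideal.span_le.2 fun f hf x hx => hx.2 f hf
  choose e he₁ he₀ using exists_indicator (K := K) X
  -- `e x` is congruent modulo `I(X)` to a multiple of any `f ∈ F` with `f(x) ≠ 0`
  have he_mem (x : Fin s → K) (hx : x ∉ VX X F) (hxX : x ∈ X) :
      e x ∈ affVanishingIdeal (X : Set (Fin s → K)) ⊔ Ideal.span (F : Set _) := by
    obtain ⟨f, hfF, hfx⟩ : ∃ f ∈ F, eval x f ≠ 0 := by simpa [VX, hxX] using hx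
    have hsplit : e x = (e x - C (eval x f)⁻¹ * f * e x) + C (eval x f)⁻¹ * f * e x := by ring
    refine hsplit ▸ Submodule.add_mem_sup (fun y hy => ?_)
      (Ideal.mul_mem_right _ _ (Ideal.mul_mem_left _ _ (Ideal.subset_span hfF)))
    by_cases hyx : y = x
    · subst hyx; simp [he₁, hfx]
    · simp [he₀ x y hy hyx]
  have hinterp : g - ∑ x ∈ X, C (eval x g) * e x ∈ affVanishingIdeal (X : Set (Fin s → K)) := by
    intro y hy
    rw [map_sub, map_sum, Finset.sum_eq_single_of_mem y hy fun x _ hxy => by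
      simp [he₀ x y hy hxy.symm]]
    simp [he₁]
  have hsum : ∑ x ∈ X, C (eval x g) * e x ∈
      affVanishingIdeal (X : Set (Fin s → K)) ⊔ Ideal.span (F : Set _) := by
    refine Ideal.sum_mem _ fun x hxX => ?_
    by_cases hx : x ∈ VX X F
    · simp [hg x hx]
    · exact Ideal.mul_mem_left _ _ (he_mem x hx hxX)
  simpa using Submodule.add_mem_sup hinterp hsum

section InitialIdeal

variable (m : MonomialOrder (Fin s))

theorem leadExp_eq_degree (f : MvPolynomial (Fin s) K) : leadExp m f = m.degree f := rfl

theorem leadMon_monomial (a : Fin s →₀ ℕ) : leadMon m (monomial a (1 : K)) = monomial a 1 := by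
  classical
  rw [leadMon, leadExp_eq_degree, m.degree_monomial, if_neg one_ne_zero]

theorem initialIdeal_eq_span_monomial_image (L : Ideal (MvPolynomial (Fin s) K)) :
    initialIdeal m L =
      Ideal.span ((monomial · (1 : K)) '' {a | ∃ f ∈ L, f ≠ 0 ∧ m.degree f = a}) := by
  rw [initialIdeal]
  congr 1
  ext g
  simp only [Set.mem_ofPred_eq, Set.mem_image, leadMon, leadExp_eq_degree]
  aesop

theorem monomial_mem_initialIdeal_iff {L : Ideal (MvPolynomial (Fin s) K)} {a : Fin s →₀ ℕ} :
    monomial a (1 : K) ∈ initialIdeal m L ↔ ∃ f ∈ L, f ≠ 0 ∧ m.degree f ≤ a := by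
  classical
  simp [initialIdeal_eq_span_monomial_image, mem_ideal_span_monomial_image, support_monomial,
    and_assoc]

theorem initialIdeal_mono {L L' : Ideal (MvPolynomial (Fin s) K)} (h : L ≤ L') :
    initialIdeal m L ≤ initialIdeal m L' :=
  Ideal.span_mono fun _ ⟨_, hf, hf0, hg⟩ => ⟨_, h hf, hf0, hg⟩

theorem leadMon_mem_initialIdeal {L : Ideal (MvPolynomial (Fin s) K)}
    {f : MvPolynomial (Fin s) K} (hf : f ∈ L) (hf0 : f ≠ 0) : leadMon m f ∈ initialIdeal m L :=
  Ideal.subset_span ⟨f, hf, hf0, rfl⟩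

theorem span_leadMonSet_le (F : Finset (MvPolynomial (Fin s) K)) :
    Ideal.span (leadMonSet m F) ≤ initialIdeal m (Ideal.span (F : Set (MvPolynomial (Fin s) K))) :=
  Ideal.span_le.2 fun _ ⟨_, hf, hf0, hg⟩ =>
    hg ▸ leadMon_mem_initialIdeal m (Ideal.subset_span hf) hf0

theorem initialIdeal_span_of_subset_range {G : Set (MvPolynomial (Fin s) K)}
    (hG : G ⊆ Set.range (monomial · (1 : K))) : initialIdeal m (Ideal.span G) = Ideal.span G := by
  classical
  rw [← Set.image_preimage_eq_of_subset hG]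
  refine le_antisymm (Ideal.span_le.2 ?_) (Ideal.span_le.2 ?_)
  · rintro _ ⟨f, hf, hf0, rfl⟩
    obtain ⟨b, hb, hle⟩ := mem_ideal_span_monomial_image.1 hf _ (m.degree_mem_support hf0)
    simpa [leadMon, mem_ideal_span_monomial_image, support_monomial] using ⟨b, hb, hle⟩
  · rintro _ ⟨a, ha, rfl⟩
    show monomial a (1 : K) ∈ initialIdeal m _
    rw [← leadMon_monomial m a]
    exact leadMon_mem_initialIdeal m (Ideal.subset_span (Set.mem_image_of_mem _ ha))
      (monomial_eq_zero.not.2 one_ne_zero)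

theorem initialIdeal_initialIdeal_sup_span_leadMonSet (L : Ideal (MvPolynomial (Fin s) K))
    (F : Finset (MvPolynomial (Fin s) K)) :
    initialIdeal m (initialIdeal m L ⊔ Ideal.span (leadMonSet m F)) =
      initialIdeal m L ⊔ Ideal.span (leadMonSet m F) := by
  have hspan : initialIdeal m L ⊔ Ideal.span (leadMonSet m F) =
      Ideal.span ({g | ∃ f ∈ L, f ≠ 0 ∧ g = leadMon m f} ∪ leadMonSet m F) :=
    (Ideal.span_union _ _).symm
  rw [hspan]
  refine initialIdeal_span_of_subset_range m ?_
  rintro _ (⟨f, -, -, rfl⟩ | ⟨f, -, -, rfl⟩) <;> exact ⟨_, rfl⟩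

/-- The exponents of the footprint `stdMonomials m L`. -/
def stdExponents (L : Ideal (MvPolynomial (Fin s) K)) : Set (Fin s →₀ ℕ) :=
  {a | monomial a (1 : K) ∉ initialIdeal m L}

theorem stdExponents_anti {L L' : Ideal (MvPolynomial (Fin s) K)}
    (h : initialIdeal m L ≤ initialIdeal m L') : stdExponents m L' ⊆ stdExponents m L :=
  fun _ ha hL => ha (h hL)

/-- Macaulay's theorem `S = L ⊕ KΔ_≺(L)`: the division algorithm by `L \ {0}` leaves a remainder
supported on standard monomials, and a nonzero element of `L` cannot be, as its leading monomial
lies in `in_≺(L)`. -/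
theorem isCompl_restrictSupport_stdExponents (L : Ideal (MvPolynomial (Fin s) K)) :
    IsCompl (L.restrictScalars K) (restrictSupport K (stdExponents m L)) := by
  constructor
  · rw [Submodule.disjoint_def]
    intro f hfL hfΔ
    by_contra hf0
    exact hfΔ (m.degree_mem_support hf0) ((monomial_mem_initialIdeal_iff m).2 ⟨f, hfL, hf0, le_rfl⟩)
  · rw [codisjoint_iff, eq_top_iff]
    intro f _
    obtain ⟨g, r, rfl, -, hr⟩ := m.div_set (B := {b | b ∈ L ∧ b ≠ 0})
      (fun b hb => (m.leadingCoeff_ne_zero_iff.2 hb.2).isUnit) f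
    refine Submodule.add_mem_sup ?_ fun c hc => ?_
    · rw [Finsupp.linearCombination_apply]
      exact Submodule.sum_mem _ fun b _ => L.smul_mem _ b.2.1
    · rw [stdExponents, Set.mem_ofPred_eq, monomial_mem_initialIdeal_iff]
      rintro ⟨b, hbL, hb0, hle⟩
      exact hr c hc b ⟨hbL, hb0⟩ hle

noncomputable def stdBasis (L : Ideal (MvPolynomial (Fin s) K)) :
    Module.Basis (stdExponents m L) K (MvPolynomial (Fin s) K ⧸ L) :=
  (basisRestrictSupport K (stdExponents m L)).map
    ((Submodule.quotientEquivOfIsCompl _ _ (isCompl_restrictSupport_stdExponents m L)).symm ≪≫ₗ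
      Submodule.Quotient.restrictScalarsEquiv K L)

-- Also when the footprint is infinite: then both sides are the junk value `0`.
theorem adeg_eq_ncard_stdExponents (L : Ideal (MvPolynomial (Fin s) K)) :
    adeg L = (stdExponents m L).ncard :=
  (Module.finrank_eq_nat_card_basis (stdBasis m L)).trans (Nat.card_coe_set_eq _)

end InitialIdeal

theorem degree_initial_footprint_general (X : Finset (Fin s → K)) (m : MonomialOrder (Fin s))
    (F : Finset (MvPolynomial (Fin s) K)) :
    (VX X F).ncard =
        adeg (affVanishingIdeal (X : Set (Fin s → K)) ⊔
          Ideal.span (F : Set (MvPolynomial (Fin s) K))) ∧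
    adeg (affVanishingIdeal (X : Set (Fin s → K)) ⊔
          Ideal.span (F : Set (MvPolynomial (Fin s) K))) ≤
      adeg (initialIdeal m (affVanishingIdeal (X : Set (Fin s → K))) ⊔
        Ideal.span (leadMonSet m F)) ∧
    adeg (initialIdeal m (affVanishingIdeal (X : Set (Fin s → K))) ⊔
        Ideal.span (leadMonSet m F)) ≤
      adeg (affVanishingIdeal (X : Set (Fin s → K))) ∧
    adeg (affVanishingIdeal (X : Set (Fin s → K))) = X.card ∧
    (¬ Ideal.span (F : Set (MvPolynomial (Fin s) K)) ≤
        affVanishingIdeal (X : Set (Fin s → K)) →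
      adeg (affVanishingIdeal (X : Set (Fin s → K)) ⊔
          Ideal.span (F : Set (MvPolynomial (Fin s) K))) <
        adeg (affVanishingIdeal (X : Set (Fin s → K)))) := by
  set I := affVanishingIdeal (X : Set (Fin s → K))
  set J := Ideal.span (F : Set (MvPolynomial (Fin s) K))
  set M := initialIdeal m I ⊔ Ideal.span (leadMonSet m F)
  have hI : adeg I = X.card := adeg_affVanishingIdeal X
  have hIJ : adeg (I ⊔ J) = (VX X F).ncard := by
    rw [affVanishingIdeal_sup_span, adeg_affVanishingIdeal_of_finite (VX_finite X F)]
  have hM : initialIdeal m M = M := initialIdeal_initialIdeal_sup_span_leadMonSet m I F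
  have hM_le : M ≤ initialIdeal m (I ⊔ J) := sup_le (initialIdeal_mono m le_sup_left)
    ((span_leadMonSet_le m F).trans (initialIdeal_mono m le_sup_right))
  have hIJ_M : stdExponents m (I ⊔ J) ⊆ stdExponents m M := stdExponents_anti m (hM.le.trans hM_le)
  have hM_I : stdExponents m M ⊆ stdExponents m I := stdExponents_anti m (le_sup_left.trans hM.ge)
  have : Finite (stdExponents m I) := Module.Finite.finite_basis (stdBasis m I)
  have hfin : (stdExponents m I).Finite := Set.toFinite _
  refine ⟨hIJ.symm, ?_, ?_, hI, fun hJ => ?_⟩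
  · rw [adeg_eq_ncard_stdExponents m, adeg_eq_ncard_stdExponents m]
    exact Set.ncard_le_ncard hIJ_M (hfin.subset hM_I)
  · rw [adeg_eq_ncard_stdExponents m, adeg_eq_ncard_stdExponents m]
    exact Set.ncard_le_ncard hM_I hfin
  · rw [hIJ, hI]
    exact ncard_VX_lt X F hJ

/-- Theorem (degree–initial-ideal–footprint inequalities). -/
theorem degree_initial_footprint (X : Finset (Fin s → K)) (m : MonomialOrder (Fin s))
    (F : Finset (MvPolynomial (Fin s) K))
    (hcol : Submodule.colon (affVanishingIdeal (X : Set (Fin s → K)))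
        (Ideal.span (F : Set (MvPolynomial (Fin s) K))) ≠
      affVanishingIdeal (X : Set (Fin s → K))) :
    (VX X F).ncard =
        adeg (affVanishingIdeal (X : Set (Fin s → K)) ⊔
          Ideal.span (F : Set (MvPolynomial (Fin s) K))) ∧
    adeg (affVanishingIdeal (X : Set (Fin s → K)) ⊔
          Ideal.span (F : Set (MvPolynomial (Fin s) K))) ≤
      adeg (initialIdeal m (affVanishingIdeal (X : Set (Fin s → K))) ⊔
        Ideal.span (leadMonSet m F)) ∧
    adeg (initialIdeal m (affVanishingIdeal (X : Set (Fin s → K))) ⊔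
        Ideal.span (leadMonSet m F)) ≤
      adeg (affVanishingIdeal (X : Set (Fin s → K))) ∧
    adeg (affVanishingIdeal (X : Set (Fin s → K))) = X.card ∧
    (¬ Ideal.span (F : Set (MvPolynomial (Fin s) K)) ≤
        affVanishingIdeal (X : Set (Fin s → K)) →
      adeg (affVanishingIdeal (X : Set (Fin s → K)) ⊔
          Ideal.span (F : Set (MvPolynomial (Fin s) K))) <
        adeg (affVanishingIdeal (X : Set (Fin s → K)))) :=
  degree_initial_footprint_general X m F
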